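/- Let Ω be a measurable space, n ≥ 1, λ ∈ Δ^n, and let q₁, …, q_n and q be probability measures on Ω. Let q̄ = Σ_{i=1}^n λ_i q_i. Then Σ_{i=1}^n λ_i · KL(q_i ‖ q) = Σ_{i=1}^n λ_i · KL(q_i ‖ q̄) + KL(q̄ ‖ q), where all terms are taken in the extended nonnegative reals [0, ∞]. -/

import Mathlib

open MeasureTheory
open scoped BigOperators ENNReal Classical

/-- The Kullback–Leibler divergence `KL(μ ‖ ν)`, valued in `[0, ∞]`: it equals
`∫ log (dμ/dν) dμ` when `μ ≪ ν` (and this integral exists), and `+∞` otherwise. -/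
noncomputable def klDiv {Ω : Type*} [MeasurableSpace Ω] (μ ν : Measure Ω) : ℝ≥0∞ :=
  if μ ≪ ν ∧ Integrable (MeasureTheory.llr μ ν) μ
  then ENNReal.ofReal (∫ x, MeasureTheory.llr μ ν x ∂μ)
  else ∞

/-! With `f_i = dq_i/dr` and `f̄ = Σ λ_i f_i = dq̄/dr`, each divergence in the identity is the
`r`-integral of a nonnegative function built from `klFun t = t log t + 1 - t`:
`KL(q_i ‖ r) = ∫ klFun f_i dr`, `KL(q̄ ‖ r) = ∫ klFun f̄ dr` and
`KL(q_i ‖ q̄) = ∫ f̄ · klFun (f_i / f̄) dr`. The identity then holds pointwise,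
`Σ λ_i klFun f_i = Σ λ_i f̄ klFun (f_i / f̄) + klFun f̄`, since the cross terms `λ_i f_i log f̄` add
up to `f̄ log f̄`. Integrating in `[0, ∞]` takes care of infinite divergences, except when
`q̄` is not absolutely continuous w.r.t. `r`; then both sides are `∞`. -/

lemma ENNReal.ne_top_of_sum_eq_one {ι : Type*} [Fintype ι] {w : ι → ℝ≥0∞}
    (hw : ∑ i, w i = 1) (i : ι) : w i ≠ ∞ :=
  ne_top_of_le_ne_top ENNReal.one_ne_top (hw ▸ Finset.single_le_sum (by simp) (Finset.mem_univ i))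

namespace MeasureTheory

variable {α ι : Type*} [MeasurableSpace α]

lemma isProbabilityMeasure_sum_smul [Fintype ι] {μ : ι → Measure α}
    [∀ i, IsProbabilityMeasure (μ i)] {w : ι → ℝ≥0∞} (hw : ∑ i, w i = 1) :
    IsProbabilityMeasure (∑ i, w i • μ i) :=
  ⟨by simp [hw]⟩

namespace Measure

lemma absolutelyContinuous_sum_smul_left [Fintype ι] {μ : ι → Measure α} {ν : Measure α}
    {w : ι → ℝ≥0∞} (h : ∀ i, w i ≠ 0 → μ i ≪ ν) : ∑ i, w i • μ i ≪ ν := by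
  rw [← sum_fintype]
  refine absolutelyContinuous_sum_left fun i => ?_
  rcases eq_or_ne (w i) 0 with hi | hi
  · simp [hi]
  · exact (h i hi).smul_left _

lemma absolutelyContinuous_sum_smul_right [Fintype ι] {μ : ι → Measure α} {w : ι → ℝ≥0∞}
    {i : ι} (hi : w i ≠ 0) : μ i ≪ ∑ j, w j • μ j := by
  rw [← sum_fintype]
  exact absolutelyContinuous_sum_right i (absolutelyContinuous_smul hi)

lemma rnDeriv_finset_sum (s : Finset ι) (μ : ι → Measure α) (ν : Measure α)
    [∀ i, IsFiniteMeasure (μ i)] [SigmaFinite ν] :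
    (∑ i ∈ s, μ i).rnDeriv ν =ᵐ[ν] ∑ i ∈ s, (μ i).rnDeriv ν := by
  induction s using Finset.induction_on with
  | empty => simp [rnDeriv_zero ν]
  | insert a s ha ih =>
    simp only [Finset.sum_insert ha]
    filter_upwards [rnDeriv_add' (μ a) (∑ i ∈ s, μ i) ν, ih] with x hx hsx
    simp [hx, hsx]

lemma rnDeriv_sum_smul [Fintype ι] (μ : ι → Measure α) (ν : Measure α)
    [∀ i, IsFiniteMeasure (μ i)] [IsFiniteMeasure ν] {w : ι → ℝ≥0∞} (hw : ∀ i, w i ≠ ∞) :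
    (∑ i, w i • μ i).rnDeriv ν =ᵐ[ν] fun x => ∑ i, w i * (μ i).rnDeriv ν x := by
  have : ∀ i, IsFiniteMeasure (w i • μ i) := fun i => (μ i).smul_finite (hw i)
  filter_upwards [rnDeriv_finset_sum Finset.univ (fun i => w i • μ i) ν,
    ae_all_iff.2 fun i => rnDeriv_smul_left_of_ne_top (μ i) ν (hw i)] with x hsum hsmul
  simp [hsum, hsmul]

end Measure

end MeasureTheory

namespace InformationTheory

open Real

lemma mul_klFun_of_eq_mul {s t g : ℝ} (ht : t = g * s) :
    s * klFun g = t * log t - t * log s + s - t := by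
  have hlog : t * log g = t * log t - t * log s := by
    rcases eq_or_ne t 0 with h0 | h0
    · simp [h0]
    · have hg : g ≠ 0 := left_ne_zero_of_mul (ht ▸ h0)
      have hs : s ≠ 0 := right_ne_zero_of_mul (ht ▸ h0)
      rw [ht, log_mul hg hs]
      ring
  rw [klFun_apply]
  linear_combination hlog - (log g - 1) * ht

/-- Here `g i` stands for `t i / s`; the multiplicative form also covers `s = 0`. -/
lemma sum_mul_klFun_eq {ι : Type*} [Fintype ι] {w t g : ι → ℝ} (hw : ∑ i, w i = 1)
    (htg : ∀ i, w i ≠ 0 → t i = g i * ∑ j, w j * t j) :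
    ∑ i, w i * klFun (t i)
      = ∑ i, w i * ((∑ j, w j * t j) * klFun (g i)) + klFun (∑ j, w j * t j) := by
  set s := ∑ j, w j * t j with hs
  have hterm : ∀ i, w i * (s * klFun (g i))
      = w i * (t i * log (t i) - t i * log s + s - t i) := by
    intro i
    rcases eq_or_ne (w i) 0 with h0 | h0
    · simp [h0]
    · rw [mul_klFun_of_eq_mul (htg i h0)]
  have hcross : ∑ i, w i * (t i * log s) = s * log s := by
    simp only [← mul_assoc, ← Finset.sum_mul, ← hs]
  simp only [hterm]
  simp only [klFun_apply, mul_add, mul_sub, Finset.sum_add_distrib, Finset.sum_sub_distrib,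
    ← Finset.sum_mul, hw, ← hs, hcross]
  ring

lemma sum_mul_ofReal_klFun_eq {ι : Type*} [Fintype ι] {w t g : ι → ℝ≥0∞} (hw : ∑ i, w i = 1)
    (ht : ∀ i, t i ≠ ∞) (htg : ∀ i, w i ≠ 0 → t i = g i * ∑ j, w j * t j) :
    ∑ i, w i * ENNReal.ofReal (klFun (t i).toReal)
      = ∑ i, w i * ((∑ j, w j * t j) * ENNReal.ofReal (klFun (g i).toReal))
        + ENNReal.ofReal (klFun (∑ j, w j * t j).toReal) := by
  have hw_top := ENNReal.ne_top_of_sum_eq_one hw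
  have hmul_top : ∀ i {a : ℝ≥0∞}, a ≠ ∞ → w i * a ≠ ∞ := fun i _ ha =>
    ENNReal.mul_ne_top (hw_top i) ha
  have hs_top : ∑ j, w j * t j ≠ ∞ := ENNReal.sum_ne_top.2 fun j _ => hmul_top j (ht j)
  have hs : (∑ j, w j * t j).toReal = ∑ j, (w j).toReal * (t j).toReal := by
    rw [ENNReal.toReal_sum fun j _ => hmul_top j (ht j)]
    simp only [ENNReal.toReal_mul]
  have hkl : ∀ a : ℝ≥0∞, (ENNReal.ofReal (klFun a.toReal)).toReal = klFun a.toReal := fun _ =>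
    ENNReal.toReal_ofReal (klFun_nonneg ENNReal.toReal_nonneg)
  have hreal := sum_mul_klFun_eq (w := fun i => (w i).toReal) (t := fun i => (t i).toReal)
    (g := fun i => (g i).toReal) (by rw [← ENNReal.toReal_sum fun i _ => hw_top i, hw]; rfl)
    (fun i hi => by
      rw [← hs, ← ENNReal.toReal_mul,
        ← htg i (by simpa [ENNReal.toReal_eq_zero_iff, hw_top i] using hi)])
  have hlhs_top : ∑ i, w i * ENNReal.ofReal (klFun (t i).toReal) ≠ ∞ :=
    ENNReal.sum_ne_top.2 fun i _ => hmul_top i ENNReal.ofReal_ne_top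
  have hrhs_top : ∑ i, w i * ((∑ j, w j * t j) * ENNReal.ofReal (klFun (g i).toReal)) ≠ ∞ :=
    ENNReal.sum_ne_top.2 fun i _ => hmul_top i (ENNReal.mul_ne_top hs_top ENNReal.ofReal_ne_top)
  rw [← ENNReal.toReal_eq_toReal_iff' hlhs_top
      (ENNReal.add_ne_top.2 ⟨hrhs_top, ENNReal.ofReal_ne_top⟩),
    ENNReal.toReal_add hrhs_top ENNReal.ofReal_ne_top,
    ENNReal.toReal_sum fun i _ => hmul_top i ENNReal.ofReal_ne_top,
    ENNReal.toReal_sum fun i _ => hmul_top i (ENNReal.mul_ne_top hs_top ENNReal.ofReal_ne_top)]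
  simp only [ENNReal.toReal_mul, hkl]
  rw [hs]
  exact hreal

variable {α : Type*} [MeasurableSpace α]

lemma klDiv_eq_lintegral_rnDeriv_mul_klFun {μ ν ρ : Measure α}
    [IsFiniteMeasure μ] [IsFiniteMeasure ν] [IsFiniteMeasure ρ] (hμν : μ ≪ ν) (hνρ : ν ≪ ρ) :
    klDiv μ ν = ∫⁻ x, ν.rnDeriv ρ x * ENNReal.ofReal (klFun (μ.rnDeriv ν x).toReal) ∂ρ := by
  rw [klDiv_eq_lintegral_klFun_of_ac hμν, lintegral_rnDeriv_mul hνρ (by fun_prop)]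

theorem sum_mul_klDiv_eq_sum_mul_klDiv_add_klDiv {ι : Type*} [Fintype ι]
    {μ : ι → Measure α} [∀ i, IsFiniteMeasure (μ i)] (ν : Measure α) [IsFiniteMeasure ν]
    {w : ι → ℝ≥0∞} (hw : ∑ i, w i = 1) :
    ∑ i, w i * klDiv (μ i) ν
      = ∑ i, w i * klDiv (μ i) (∑ j, w j • μ j) + klDiv (∑ j, w j • μ j) ν := by
  set μbar := ∑ j, w j • μ j
  have hw_top := ENNReal.ne_top_of_sum_eq_one hw
  have : ∀ i, IsFiniteMeasure (w i • μ i) := fun i => (μ i).smul_finite (hw_top i)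
  by_cases hac : μbar ≪ ν
  swap
  · obtain ⟨i, hi, hiac⟩ : ∃ i, w i ≠ 0 ∧ ¬ μ i ≪ ν := by
      by_contra! h
      exact hac (Measure.absolutelyContinuous_sum_smul_left h)
    have hsum : ∑ i, w i * klDiv (μ i) ν = ∞ :=
      ENNReal.sum_eq_top.2 ⟨i, Finset.mem_univ i, by rw [klDiv_of_not_ac hiac, ENNReal.mul_top hi]⟩
    rw [hsum, klDiv_of_not_ac hac, add_top]
  have hac_i : ∀ i, w i ≠ 0 → μ i ≪ ν := fun i hi =>
    (Measure.absolutelyContinuous_sum_smul_right hi).trans hac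
  have hleft : ∀ i, w i * klDiv (μ i) ν
      = ∫⁻ x, w i * ENNReal.ofReal (klFun ((μ i).rnDeriv ν x).toReal) ∂ν := by
    intro i
    rcases eq_or_ne (w i) 0 with hi | hi
    · simp [hi]
    · rw [klDiv_eq_lintegral_klFun_of_ac (hac_i i hi), lintegral_const_mul _ (by fun_prop)]
  have hmid : ∀ i, w i * klDiv (μ i) μbar = ∫⁻ x,
      w i * (μbar.rnDeriv ν x * ENNReal.ofReal (klFun ((μ i).rnDeriv μbar x).toReal)) ∂ν := by
    intro i
    rcases eq_or_ne (w i) 0 with hi | hi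
    · simp [hi]
    · rw [klDiv_eq_lintegral_rnDeriv_mul_klFun (Measure.absolutelyContinuous_sum_smul_right hi)
        hac, lintegral_const_mul _ (by fun_prop)]
  have hchain : ∀ᵐ x ∂ν, ∀ i, w i ≠ 0 →
      (μ i).rnDeriv ν x = (μ i).rnDeriv μbar x * μbar.rnDeriv ν x := by
    refine ae_all_iff.2 fun i => ?_
    rcases eq_or_ne (w i) 0 with hi | hi
    · simp [hi]
    · filter_upwards [Measure.rnDeriv_mul_rnDeriv (κ := ν)
        (Measure.absolutelyContinuous_sum_smul_right (μ := μ) hi)] with x hx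
      exact fun _ => hx.symm
  simp only [hleft, hmid]
  rw [← lintegral_finsetSum _ fun i _ => by fun_prop,
    ← lintegral_finsetSum _ fun i _ => by fun_prop,
    klDiv_eq_lintegral_klFun_of_ac hac, ← lintegral_add_right _ (by fun_prop)]
  refine lintegral_congr_ae ?_
  filter_upwards [(Measure.rnDeriv_sum_smul μ ν hw_top : μbar.rnDeriv ν =ᵐ[ν] _),
    ae_all_iff.2 fun i => Measure.rnDeriv_lt_top (μ i) ν, hchain] with x hbar htop hchain
  rw [hbar] at hchain ⊢
  exact sum_mul_ofReal_klFun_eq hw (fun i => (htop i).ne) hchain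

end InformationTheory

/-- Mathlib's `InformationTheory.klDiv` adds the mass correction `ν(univ) - μ(univ)`. -/
lemma klDiv_eq_informationTheory_klDiv {α : Type*} [MeasurableSpace α] {μ ν : Measure α}
    (h : μ Set.univ = ν Set.univ) : klDiv μ ν = InformationTheory.klDiv μ ν := by
  rw [klDiv, InformationTheory.klDiv_def, measureReal_def, measureReal_def, h,
    add_sub_cancel_right]

theorem compensation_identity_klDiv_general
    {Ω : Type*} [MeasurableSpace Ω] {n : ℕ}
    (lam : Fin n → ℝ) (hNonneg : ∀ i, 0 ≤ lam i) (hSum : (∑ i, lam i) = 1)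
    (q : Fin n → Measure Ω) (hq : ∀ i, IsProbabilityMeasure (q i))
    (r : Measure Ω) (hr : IsProbabilityMeasure r) :
    ∑ i, ENNReal.ofReal (lam i) * klDiv (q i) r
      = (∑ i, ENNReal.ofReal (lam i) * klDiv (q i) (∑ j, ENNReal.ofReal (lam j) • q j))
        + klDiv (∑ j, ENNReal.ofReal (lam j) • q j) r := by
  have hw : ∑ i, ENNReal.ofReal (lam i) = 1 := by
    rw [← ENNReal.ofReal_sum_of_nonneg fun i _ => hNonneg i, hSum, ENNReal.ofReal_one]
  have : IsProbabilityMeasure (∑ j, ENNReal.ofReal (lam j) • q j) :=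
    isProbabilityMeasure_sum_smul hw
  simp only [klDiv_eq_informationTheory_klDiv, measure_univ]
  exact InformationTheory.sum_mul_klDiv_eq_sum_mul_klDiv_add_klDiv r hw

/-- compensation identity. For probability measures `q₁, …, q_n`, `q` on `Ω`
and `λ` in the simplex `Δ^n`, with `q̄ = Σ_i λ_i q_i`, one has
`Σ_i λ_i KL(q_i ‖ q) = Σ_i λ_i KL(q_i ‖ q̄) + KL(q̄ ‖ q)` in the extended nonnegative reals. -/
theorem compensation_identity_klDiv
    {Ω : Type*} [MeasurableSpace Ω] {n : ℕ} (hn : 1 ≤ n)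
    (lam : Fin n → ℝ) (hNonneg : ∀ i, 0 ≤ lam i) (hSum : (∑ i, lam i) = 1)
    (q : Fin n → Measure Ω) (hq : ∀ i, IsProbabilityMeasure (q i))
    (r : Measure Ω) (hr : IsProbabilityMeasure r) :
    ∑ i, ENNReal.ofReal (lam i) * klDiv (q i) r
      = (∑ i, ENNReal.ofReal (lam i) * klDiv (q i) (∑ j, ENNReal.ofReal (lam j) • q j))
        + klDiv (∑ j, ENNReal.ofReal (lam j) • q j) r :=
  compensation_identity_klDiv_general lam hNonneg hSum q hq r hr
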